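/- arXiv:2011.14225 — 4 statements merged into one kernel-verified Lean document; each statement's English description precedes it below -/
import Mathlib

section
/- Let R₁ and R₂ be rings and let F : R₁ → Set R₂ be a powerful set-valued homomorphism, i.e. F(x + y) = F(x) + F(y), F(x·y) = F(x)·F(y), and F(-x) = -F(x) for all x, y ∈ R₁ (pointwise set operations). Let S be a subring of R₂ with F(0) ⊆ S and F(1) ⊆ S. Then the lower approximation F₋(S) = {x ∈ R₁ : F(x) ⊆ S} is a subring of R₁, i.e. it contains 0 and 1 and is closed under addition, negation, and multiplication. -/
open Pointwise

theorem lower_approx_subring {R₁ R₂ : Type*} [Ring R₁] [Ring R₂]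
    (F : R₁ → Set R₂)
    (hadd : ∀ x y : R₁, F (x + y) = F x + F y)
    (hmul : ∀ x y : R₁, F (x * y) = F x * F y)
    (hneg : ∀ x : R₁, F (-x) = -F x)
    (S : Subring R₂) (h0 : F 0 ⊆ (S : Set R₂)) (h1 : F 1 ⊆ (S : Set R₂)) :
    (0 : R₁) ∈ {x : R₁ | F x ⊆ (S : Set R₂)} ∧
    (1 : R₁) ∈ {x : R₁ | F x ⊆ (S : Set R₂)} ∧
    (∀ x y : R₁, x ∈ {x : R₁ | F x ⊆ (S : Set R₂)} → y ∈ {x : R₁ | F x ⊆ (S : Set R₂)} →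
      x + y ∈ {x : R₁ | F x ⊆ (S : Set R₂)}) ∧
    (∀ x : R₁, x ∈ {x : R₁ | F x ⊆ (S : Set R₂)} → -x ∈ {x : R₁ | F x ⊆ (S : Set R₂)}) ∧
    (∀ x y : R₁, x ∈ {x : R₁ | F x ⊆ (S : Set R₂)} → y ∈ {x : R₁ | F x ⊆ (S : Set R₂)} →
      x * y ∈ {x : R₁ | F x ⊆ (S : Set R₂)}) := by
  refine ⟨h0, h1, ?_, ?_, ?_⟩
  · intro x y hx hy
    rw [Set.mem_setOf_eq, hadd]
    rintro _ ⟨a, ha, b, hb, rfl⟩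
    exact S.add_mem (hx ha) (hy hb)
  · intro x hx
    rw [Set.mem_setOf_eq, hneg]
    intro a ha
    rw [Set.mem_neg] at ha
    simpa using S.neg_mem (hx ha)
  · intro x y hx hy
    rw [Set.mem_setOf_eq, hmul]
    rintro _ ⟨a, ha, b, hb, rfl⟩
    exact S.mul_mem (hx ha) (hy hb)
end

section
/- Let R₁ and R₂ be rings, let ρ : R₁ → R₂ be a surjective ring homomorphism, and let F₂ : R₂ → Set R₂ be a set-valued map. Define F₁ : R₁ → Set R₁ by F₁(x) = {r ∈ R₁ : ρ(r) ∈ F₂(ρ(x))}. Then for every subset A ⊆ R₁, the image under ρ of the upper approximation of A with respect to F₁ equals the upper approximation of ρ(A) with respect to F₂: ρ({x ∈ R₁ : F₁(x) ∩ A ≠ ∅}) = {y ∈ R₂ : F₂(y) ∩ ρ(A) ≠ ∅}. -/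
theorem image_upper_approx_eq {R₁ R₂ : Type*} [Ring R₁] [Ring R₂]
    (ρ : R₁ →+* R₂) (hρ : Function.Surjective ρ)
    (F₂ : R₂ → Set R₂)
    (F₁ : R₁ → Set R₁)
    (hF₁ : ∀ x : R₁, F₁ x = {r : R₁ | ρ r ∈ F₂ (ρ x)})
    (A : Set R₁) :
    ρ '' {x : R₁ | (F₁ x ∩ A).Nonempty} = {y : R₂ | (F₂ y ∩ (ρ '' A)).Nonempty} := by
  ext y
  constructor
  · rintro ⟨x, ⟨a, ha1, ha2⟩, rfl⟩
    rw [hF₁] at ha1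
    exact ⟨ρ a, ha1, a, ha2, rfl⟩
  · rintro ⟨z, hz, a, ha, rfl⟩
    obtain ⟨x, rfl⟩ := hρ y
    exact ⟨x, ⟨a, by rw [hF₁]; exact hz, ha⟩, rfl⟩
end

section
/- Let R₁ and R₂ be rings and let F : R₁ → Set R₂ be a powerful set-valued homomorphism, i.e. F(x + y) = F(x) + F(y), F(x·y) = F(x)·F(y), and F(-x) = -F(x) for all x, y ∈ R₁ (pointwise set operations). Then the kernel ker(F) = {x ∈ R₁ : F(x) = F(0)} is a non-unital subring of R₁: it contains 0 and is closed under addition, negation, and multiplication. -/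
open Pointwise

theorem ker_subring {R₁ R₂ : Type*} [Ring R₁] [Ring R₂]
    (F : R₁ → Set R₂)
    (hadd : ∀ x y : R₁, F (x + y) = F x + F y)
    (hmul : ∀ x y : R₁, F (x * y) = F x * F y)
    (hneg : ∀ x : R₁, F (-x) = -F x) :
    (0 : R₁) ∈ {x : R₁ | F x = F 0} ∧
    (∀ x y : R₁, x ∈ {x : R₁ | F x = F 0} → y ∈ {x : R₁ | F x = F 0} →
      x + y ∈ {x : R₁ | F x = F 0}) ∧
    (∀ x : R₁, x ∈ {x : R₁ | F x = F 0} → -x ∈ {x : R₁ | F x = F 0}) ∧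
    (∀ x y : R₁, x ∈ {x : R₁ | F x = F 0} → y ∈ {x : R₁ | F x = F 0} →
      x * y ∈ {x : R₁ | F x = F 0}) := by
  refine ⟨rfl, ?_, ?_, ?_⟩
  · intro x y hx hy
    show F (x + y) = F 0
    rw [hadd, hx, hy, ← hadd, add_zero]
  · intro x hx
    show F (-x) = F 0
    rw [hneg, hx, ← hneg, neg_zero]
  · intro x y hx hy
    show F (x * y) = F 0
    rw [hmul, hx, hy, ← hmul, zero_mul]
end

section
/- Let R₁ and R₂ be rings and let F : R₁ → Set R₂ satisfy F(x + y) = F(x) + F(y) for all x, y ∈ R₁ (pointwise sum of sets). If a, b ∈ R₁ satisfy F(a - b) = F(0), then F(a) = F(b). (This is the well-definedness of the map a + ker(F) ↦ F(a) in the fundamental homomorphism theorem for powerful set-valued homomorphisms.) -/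
open Pointwise

theorem ker_well_defined {R₁ R₂ : Type*} [Ring R₁] [Ring R₂]
    (F : R₁ → Set R₂)
    (hadd : ∀ x y : R₁, F (x + y) = F x + F y)
    (a b : R₁) (h : F (a - b) = F 0) :
    F a = F b := by
  have h1 := hadd (a - b) b
  rw [sub_add_cancel, h, ← hadd, zero_add] at h1
  exact h1
end
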